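/- Let X, T, Y be as in the doubly robust setup (finite covariate set, finite treatment set, positivity, conditional exchangeability), and let μ̂_t and p̂_t be arbitrary measurable functions with p̂_t(x) ∈ (0,1]. Define ψ̂_t(X,T,Y) = μ̂_t(X) + 1{T=t}(Y - μ̂_t(X))/p̂_t(X). If either μ̂_t = μ_t (almost surely) or p̂_t = p_t (almost surely), then E[ψ̂_t(X,T,Y)] = E[Y(t)]. -/

import Mathlib

open MeasureTheory ProbabilityTheory

/-!
Conditionally on `X = x`, exchangeability makes `Y t` independent of `T`, so the correction term
of the estimator has conditional mean `p t x * (m x - μhat x) / phat x`, where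
`m x = E[Y t | X = x]`; by the same independence `μt x = m x`. Hence the conditional mean of the
estimator is `m x` as soon as `μhat x = μt x` or `phat x = p t x`, and averaging over the finitely
many strata gives `E[Y t]`.
-/

section

variable {Ω 𝒯 : Type*} [MeasurableSpace Ω] [MeasurableSpace 𝒯]

theorem MeasureTheory.Integrable.cond {μ : Measure Ω} {f : Ω → ℝ} (hf : Integrable f μ)
    (s : Set Ω) : Integrable f μ[|s] := by
  by_cases h : μ s = 0
  · simp [cond_eq_zero_of_meas_eq_zero h]
  · exact hf.restrict.smul_measure (ENNReal.inv_ne_top.mpr h)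

theorem integral_eq_sum_measureReal_mul_integral_cond {α : Type*} [Fintype α]
    [MeasurableSpace α] [DiscreteMeasurableSpace α] {X : Ω → α} (hX : Measurable X) (μ : Measure Ω)
    [IsFiniteMeasure μ] {f : Ω → ℝ} (hf : Integrable f μ) :
    ∫ ω, f ω ∂μ = ∑ x, μ.real (X ⁻¹' {x}) * ∫ ω, f ω ∂μ[|X ← x] := by
  rw [← sum_meas_smul_cond_fiber hX μ] at hf
  conv_lhs => rw [← sum_meas_smul_cond_fiber hX μ]
  rw [integral_finsetSum_measure fun x _ =>
    integrable_finsetSum_measure.mp hf x (Finset.mem_univ x)]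
  simp [integral_smul_measure, Measure.real]

variable {ν : Measure Ω} {f : Ω → ℝ} {T : Ω → 𝒯}

theorem ProbabilityTheory.IndepFun.setIntegral_preimage_eq_mul (hfT : IndepFun f T ν)
    (hf : AEStronglyMeasurable f ν) (hT : Measurable T) {s : Set 𝒯} (hs : MeasurableSet s) :
    ∫ ω in T ⁻¹' s, f ω ∂ν = ν.real (T ⁻¹' s) * ∫ ω, f ω ∂ν := by
  have hind : IndepFun f ((T ⁻¹' s).indicator (1 : Ω → ℝ)) ν :=
    hfT.comp measurable_id (measurable_one.indicator hs)
  have hfactor : (T ⁻¹' s).indicator f = f * (T ⁻¹' s).indicator (1 : Ω → ℝ) := by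
    ext ω
    by_cases hω : ω ∈ T ⁻¹' s <;> simp [hω]
  rw [← integral_indicator (hT hs), hfactor, hind.integral_mul_eq_mul_integral hf
    ((measurable_one.indicator (hT hs)).aestronglyMeasurable), integral_indicator_one (hT hs),
    mul_comm]

theorem ProbabilityTheory.IndepFun.integral_cond_preimage [IsFiniteMeasure ν]
    (hfT : IndepFun f T ν) (hf : AEStronglyMeasurable f ν) (hT : Measurable T) {s : Set 𝒯}
    (hs : MeasurableSet s) (hTs : ν (T ⁻¹' s) ≠ 0) : ∫ ω, f ω ∂ν[|T ⁻¹' s] = ∫ ω, f ω ∂ν := by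
  rw [cond, integral_smul_measure, hfT.setIntegral_preimage_eq_mul hf hT hs, smul_eq_mul,
    ← mul_assoc, ENNReal.toReal_inv, ← Measure.real, inv_mul_cancel₀, one_mul]
  exact (measureReal_ne_zero_iff (measure_ne_top _ _)).mpr hTs

theorem integral_cond_treatment_eq [IsFiniteMeasure ν] [MeasurableSingletonClass 𝒯]
    {Y : 𝒯 → Ω → ℝ} {t : 𝒯} (hT : Measurable T)
    (hY : AEStronglyMeasurable (Y t) ν) (hYT : IndepFun (Y t) T ν) (ht : ν (T ⁻¹' {t}) ≠ 0) :
    ∫ ω, Y (T ω) ω ∂ν[|T ⁻¹' {t}] = ∫ ω, Y t ω ∂ν := by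
  rw [← hYT.integral_cond_preimage hY hT (measurableSet_singleton t) ht]
  refine integral_congr_ae ?_
  filter_upwards [ae_cond_mem (hT (measurableSet_singleton t))] with ω hω
  exact congrArg (Y · ω) hω

end

section

variable {Ω 𝒳 𝒯 : Type*} [DecidableEq 𝒯]

/-- The augmented inverse-probability-weighted estimator `ψ̂_t`. -/
noncomputable def aipw (μhat phat : 𝒳 → ℝ) (X : Ω → 𝒳) (T : Ω → 𝒯) (Y : 𝒯 → Ω → ℝ)
    (t : 𝒯) (ω : Ω) : ℝ :=
  μhat (X ω) + (if T ω = t then (1 : ℝ) else 0) * (Y (T ω) ω - μhat (X ω)) / phat (X ω)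

theorem aipw_eq_add_indicator_mul (μhat phat : 𝒳 → ℝ) (X : Ω → 𝒳) (T : Ω → 𝒯)
    (Y : 𝒯 → Ω → ℝ) (t : 𝒯) (ω : Ω) :
    aipw μhat phat X T Y t ω =
      μhat (X ω) + (T ⁻¹' {t}).indicator (fun ω => (phat (X ω))⁻¹) ω * (Y t ω - μhat (X ω)) := by
  by_cases h : T ω = t <;> simp [aipw, h, div_eq_inv_mul, mul_comm]

variable [MeasurableSpace Ω] [MeasurableSpace 𝒯] [MeasurableSingletonClass 𝒯]
  {ν : Measure Ω} {T : Ω → 𝒯} {Y : 𝒯 → Ω → ℝ} {t : 𝒯}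

theorem integrable_aipw [MeasurableSpace 𝒳] [MeasurableSingletonClass 𝒳] [Finite 𝒳]
    [IsFiniteMeasure ν] (μhat phat : 𝒳 → ℝ) {X : Ω → 𝒳} (hX : Measurable X)
    (hT : Measurable T) (hY : Integrable (Y t) ν) : Integrable (aipw μhat phat X T Y t) ν := by
  obtain ⟨C, hC⟩ := Finite.exists_le fun x => ‖μhat x‖
  obtain ⟨D, hD⟩ := Finite.exists_le fun x => ‖(phat x)⁻¹‖
  have hμX : Integrable (fun ω => μhat (X ω)) ν :=
    .of_bound ((measurable_of_finite μhat).comp hX).aestronglyMeasurable C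
      (.of_forall fun ω => hC (X ω))
  have hweight : Integrable (fun ω => (T ⁻¹' {t}).indicator (fun ω => (phat (X ω))⁻¹) ω *
      (Y t ω - μhat (X ω))) ν := by
    refine (hY.sub hμX).bdd_mul (c := D) (Measurable.aestronglyMeasurable <|
      ((measurable_of_finite fun x => (phat x)⁻¹).comp hX).indicator
        (hT (measurableSet_singleton t))) (.of_forall fun ω => ?_)
    by_cases h : T ω = t
    · simpa [h] using hD (X ω)
    · simpa [h] using (norm_nonneg _).trans (hD (X ω))
  exact (hμX.add hweight).congr (.of_forall fun ω => (aipw_eq_add_indicator_mul ..).symm)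

theorem integral_aipw_of_ae_eq [IsProbabilityMeasure ν] (μhat phat : 𝒳 → ℝ) {X : Ω → 𝒳}
    {x : 𝒳} (hXx : ∀ᵐ ω ∂ν, X ω = x) (hT : Measurable T) (hY : Integrable (Y t) ν)
    (hYT : IndepFun (Y t) T ν) :
    ∫ ω, aipw μhat phat X T Y t ω ∂ν =
      μhat x + ν.real (T ⁻¹' {t}) * ((∫ ω, Y t ω ∂ν) - μhat x) / phat x := by
  have hTt : MeasurableSet (T ⁻¹' {t}) := hT (measurableSet_singleton t)
  have hres : Integrable (fun ω => Y t ω - μhat x) ν := hY.sub (integrable_const _)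
  have hresT : IndepFun (fun ω => Y t ω - μhat x) T ν :=
    hYT.comp (measurable_id.sub_const _) measurable_id
  calc ∫ ω, aipw μhat phat X T Y t ω ∂ν
      = ∫ ω, μhat x + (T ⁻¹' {t}).indicator (fun ω => Y t ω - μhat x) ω / phat x ∂ν := by
        refine integral_congr_ae ?_
        filter_upwards [hXx] with ω hω
        by_cases h : T ω = t <;> simp [aipw, h, hω]
    _ = μhat x + (∫ ω in T ⁻¹' {t}, Y t ω - μhat x ∂ν) / phat x := by
        rw [integral_add (integrable_const _) ((hres.indicator hTt).div_const _),
          integral_const, integral_div, integral_indicator hTt]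
        simp
    _ = _ := by
        rw [hresT.setIntegral_preimage_eq_mul hres.1 hT (measurableSet_singleton t),
          integral_sub hY (integrable_const _)]
        simp

end

theorem stmt8_general {Ω 𝒳 𝒯 : Type*} [MeasurableSpace Ω]
    [Fintype 𝒳] [MeasurableSpace 𝒳] [MeasurableSingletonClass 𝒳]
    [DecidableEq 𝒯] [MeasurableSpace 𝒯] [MeasurableSingletonClass 𝒯]
    (μ : Measure Ω) [IsProbabilityMeasure μ]
    (X : Ω → 𝒳) (T : Ω → 𝒯) (Y : 𝒯 → Ω → ℝ)
    (hX : Measurable X) (hT : Measurable T)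
    (hYint : ∀ t, Integrable (Y t) μ)
    (p : 𝒯 → 𝒳 → ℝ)
    (hp : ∀ t x, p t x = ((μ[|X ⁻¹' {x}]) (T ⁻¹' {t})).toReal)
    (hpos : ∀ t x, 0 < p t x)
    (hexch : ∀ t x, IndepFun (Y t) T (μ[|X ⁻¹' {x}]))
    (t : 𝒯)
    (μt : 𝒳 → ℝ)
    (hμt : ∀ x, μt x = ∫ ω, Y (T ω) ω ∂(μ[|X ⁻¹' {x} ∩ T ⁻¹' {t}]))
    (μhat phat : 𝒳 → ℝ)
    (hcorrect : (∀ x, μhat x = μt x) ∨ (∀ x, phat x = p t x))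
    (ψhat : Ω → ℝ)
    (hψhat : ∀ ω, ψhat ω = μhat (X ω) +
        (if T ω = t then (1 : ℝ) else 0) * (Y (T ω) ω - μhat (X ω)) / phat (X ω)) :
    ∫ ω, ψhat ω ∂μ = ∫ ω, Y t ω ∂μ := by
  obtain rfl : ψhat = aipw μhat phat X T Y t := funext hψhat
  have hstratum : ∀ x, ∫ ω, aipw μhat phat X T Y t ω ∂μ[|X ← x] = ∫ ω, Y t ω ∂μ[|X ← x] := by
    intro x
    have hx : μ (X ⁻¹' {x}) ≠ 0 := fun h => by
      simpa [hp t x, cond_eq_zero_of_meas_eq_zero h] using hpos t x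
    have := cond_isProbabilityMeasure hx
    have hXx : ∀ᵐ ω ∂μ[|X ← x], X ω = x := ae_cond_mem (hX (measurableSet_singleton x))
    have hpx : (μ[|X ← x]).real (T ⁻¹' {t}) = p t x := (hp t x).symm
    rw [integral_aipw_of_ae_eq μhat phat hXx hT ((hYint t).cond _) (hexch t x), hpx]
    rcases hcorrect with hμhat | hphat
    · have hμtx : μt x = ∫ ω, Y t ω ∂μ[|X ← x] := by
        rw [hμt x, ← cond_cond_eq_cond_inter (hX (measurableSet_singleton x))
          (hT (measurableSet_singleton t))]
        refine integral_cond_treatment_eq hT ((hYint t).cond _).1 (hexch t x) fun h => ?_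
        simpa [hp t x, h] using hpos t x
      simp [hμhat x, hμtx]
    · rw [hphat x]
      field_simp [(hpos t x).ne']
      ring
  rw [integral_eq_sum_measureReal_mul_integral_cond hX μ
      (integrable_aipw μhat phat hX hT (hYint t)),
    integral_eq_sum_measureReal_mul_integral_cond hX μ (hYint t)]
  simp_rw [hstratum]

/-- Double robustness: the augmented IPW estimator is unbiased for the mean potential
outcome if either the outcome regression or the propensity model is correct. -/
theorem stmt8 {Ω 𝒳 𝒯 : Type*} [MeasurableSpace Ω]
    [Fintype 𝒳] [MeasurableSpace 𝒳] [MeasurableSingletonClass 𝒳]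
    [Fintype 𝒯] [DecidableEq 𝒯] [MeasurableSpace 𝒯] [MeasurableSingletonClass 𝒯]
    (μ : Measure Ω) [IsProbabilityMeasure μ]
    (X : Ω → 𝒳) (T : Ω → 𝒯) (Y : 𝒯 → Ω → ℝ)
    (hX : Measurable X) (hT : Measurable T) (hY : ∀ t, Measurable (Y t))
    (hYint : ∀ t, Integrable (Y t) μ)
    (p : 𝒯 → 𝒳 → ℝ)
    (hp : ∀ t x, p t x = ((μ[|X ⁻¹' {x}]) (T ⁻¹' {t})).toReal)
    (hpos : ∀ t x, 0 < p t x)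
    (hexch : ∀ t x, IndepFun (Y t) T (μ[|X ⁻¹' {x}]))
    (t : 𝒯)
    (μt : 𝒳 → ℝ)
    (hμt : ∀ x, μt x = ∫ ω, Y (T ω) ω ∂(μ[|X ⁻¹' {x} ∩ T ⁻¹' {t}]))
    (μhat phat : 𝒳 → ℝ)
    (hphat : ∀ x, phat x ∈ Set.Ioc (0 : ℝ) 1)
    (hcorrect : (∀ x, μhat x = μt x) ∨ (∀ x, phat x = p t x))
    (ψhat : Ω → ℝ)
    (hψhat : ∀ ω, ψhat ω = μhat (X ω) +
        (if T ω = t then (1 : ℝ) else 0) * (Y (T ω) ω - μhat (X ω)) / phat (X ω)) :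
    ∫ ω, ψhat ω ∂μ = ∫ ω, Y t ω ∂μ :=
  stmt8_general μ X T Y hX hT hYint p hp hpos hexch t μt hμt μhat phat hcorrect ψhat hψhat
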